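/- Let H be a finite-dimensional biperfect weak Hopf algebra over a field k with invertible weak antipode T, let {e_i}_{i∈I} be a basis of H with dual basis {e^i}_{i∈I} in H*, and let R = Σ_{i∈I} (ε ∞ e_i) ⊗ (e^i ∞ 1) ∈ D(H) ⊗ D(H). Then (Δ ⊗ id)(R) = R_{13}R_{23} and (id ⊗ Δ)(R) = R_{13}R_{12} in D(H)^{⊗3}, where Δ is the coproduct of D(H) and R_{12} = R ⊗ 1, R_{23} = 1 ⊗ R, R_{13} = (τ ⊗ id)(1 ⊗ R) with τ the flip of the first two tensor factors. -/

import Mathlib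

noncomputable section

open TensorProduct

/-- The data of a (weak) bialgebra on a `k`-vector space `H`:
multiplication, unit, comultiplication and counit, all as linear maps. -/
structure BialgData (k : Type) [Field k] (H : Type) [AddCommGroup H] [Module k H] where
  mul : H ⊗[k] H →ₗ[k] H
  one : H
  comul : H →ₗ[k] H ⊗[k] H
  counit : H →ₗ[k] k

namespace BialgData

variable {k : Type} [Field k] {H : Type} [AddCommGroup H] [Module k H]

/-- The axioms making `BialgData` an honest bialgebra. -/
structure IsBialgebra (B : BialgData k H) : Prop where
  mul_assoc : ∀ x y z : H, B.mul (B.mul (x ⊗ₜ y) ⊗ₜ z) = B.mul (x ⊗ₜ B.mul (y ⊗ₜ z))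
  one_mul : ∀ x : H, B.mul (B.one ⊗ₜ x) = x
  mul_one : ∀ x : H, B.mul (x ⊗ₜ B.one) = x
  coassoc : ∀ x : H,
    (TensorProduct.assoc k H H H) ((TensorProduct.map B.comul LinearMap.id) (B.comul x))
      = (TensorProduct.map LinearMap.id B.comul) (B.comul x)
  counit_comul : ∀ x : H,
    (TensorProduct.lid k H) ((TensorProduct.map B.counit LinearMap.id) (B.comul x)) = x
  comul_counit : ∀ x : H,
    (TensorProduct.rid k H) ((TensorProduct.map LinearMap.id B.counit) (B.comul x)) = x
  comul_mul : ∀ x y : H,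
    B.comul (B.mul (x ⊗ₜ y)) =
      (TensorProduct.map B.mul B.mul)
        ((TensorProduct.tensorTensorTensorComm k H H H H) (B.comul x ⊗ₜ B.comul y))
  comul_one : B.comul B.one = B.one ⊗ₜ B.one
  counit_mul : ∀ x y : H, B.counit (B.mul (x ⊗ₜ y)) = B.counit x * B.counit y
  counit_one : B.counit B.one = 1

/-- Convolution product of linear endomorphisms: `f ∗ g = mul ∘ (f ⊗ g) ∘ comul`. -/
def conv (B : BialgData k H) (f g : H →ₗ[k] H) : H →ₗ[k] H :=
  B.mul ∘ₗ TensorProduct.map f g ∘ₗ B.comul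

/-- `T` is a weak antipode: `id ∗ T ∗ id = id` and `T ∗ id ∗ T = T`. -/
def IsWeakAntipode (B : BialgData k H) (T : H →ₗ[k] H) : Prop :=
  B.conv (B.conv LinearMap.id T) LinearMap.id = LinearMap.id ∧
    B.conv (B.conv T LinearMap.id) T = T

/-- `T` is an anti-bialgebra morphism: `T(xy) = T(y)T(x)`, `T(1) = 1`,
`Δ(T x) = Σ T(x'') ⊗ T(x')` and `ε ∘ T = ε`. -/
def IsAntiBialgebraHom (B : BialgData k H) (T : H →ₗ[k] H) : Prop :=
  (∀ x y : H, T (B.mul (x ⊗ₜ y)) = B.mul (T y ⊗ₜ T x)) ∧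
  T B.one = B.one ∧
  (∀ x : H, B.comul (T x) =
    (TensorProduct.comm k H H) ((TensorProduct.map T T) (B.comul x))) ∧
  ∀ x : H, B.counit (T x) = B.counit x

/-- `H` is perfect: `T` is an anti-bialgebra morphism and `(id ∗ T)(H) ⊆ C(H)`,
i.e. `Σ x'T(x'')` is central for every `x`. -/
def Perfect (B : BialgData k H) (T : H →ₗ[k] H) : Prop :=
  B.IsAntiBialgebraHom T ∧
    ∀ x y : H,
      B.mul ((B.conv LinearMap.id T) x ⊗ₜ y) = B.mul (y ⊗ₜ (B.conv LinearMap.id T) x)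

/-- `H` is coperfect: `T` is an anti-bialgebra morphism and
`Σ x'T(x'') ⊗ x''' = Σ x''T(x''') ⊗ x'` for every `x`. -/
def Coperfect (B : BialgData k H) (T : H →ₗ[k] H) : Prop :=
  B.IsAntiBialgebraHom T ∧
    ∀ x : H,
      (TensorProduct.map (B.conv LinearMap.id T) LinearMap.id) (B.comul x)
        = (TensorProduct.comm k H H)
            ((TensorProduct.map LinearMap.id (B.conv LinearMap.id T)) (B.comul x))

/-- `H` is biperfect: perfect and coperfect. -/
def Biperfect (B : BialgData k H) (T : H →ₗ[k] H) : Prop :=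
  B.Perfect T ∧ B.Coperfect T

/-- The opposite bialgebra `H^op`: same coalgebra, opposite multiplication. -/
def op (B : BialgData k H) : BialgData k H :=
  { B with mul := B.mul ∘ₗ (TensorProduct.comm k H H).toLinearMap }

/-- The co-opposite bialgebra `H^cop`: same algebra, opposite comultiplication. -/
def cop (B : BialgData k H) : BialgData k H :=
  { B with comul := (TensorProduct.comm k H H).toLinearMap ∘ₗ B.comul }

/-- `H` is commutative. -/
def Commutative (B : BialgData k H) : Prop :=
  ∀ x y : H, B.mul (x ⊗ₜ y) = B.mul (y ⊗ₜ x)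

/-- `H` is cocommutative. -/
def Cocommutative (B : BialgData k H) : Prop :=
  ∀ x : H, (TensorProduct.comm k H H) (B.comul x) = B.comul x

/-- The dual weak Hopf algebra structure on `H* = Module.Dual k H` (for `H` finite
dimensional): convolution multiplication `(fg)(x) = Σ f(x')g(x'')`, unit `ε`,
comultiplication dual to the multiplication of `H`, counit `f ↦ f 1`. -/
def dual (B : BialgData k H) [FiniteDimensional k H] :
    BialgData k (Module.Dual k H) where
  mul := B.comul.dualMap ∘ₗ TensorProduct.dualDistrib k H H
  one := B.counit
  comul := ((TensorProduct.dualDistribEquiv k H H).symm :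
      Module.Dual k (H ⊗[k] H) →ₗ[k] Module.Dual k H ⊗[k] Module.Dual k H) ∘ₗ
    B.mul.dualMap
  counit := Module.Dual.eval k H B.one

section Reshuffle

variable (k)
variable (M N P : Type) [AddCommGroup M] [AddCommGroup N] [AddCommGroup P]
  [Module k M] [Module k N] [Module k P]

/-- `(u ⊗ v) ⊗ w ↦ (u ⊗ w) ⊗ v`. -/
def swap23 : (M ⊗[k] N) ⊗[k] P →ₗ[k] (M ⊗[k] P) ⊗[k] N :=
  ((TensorProduct.assoc k M P N).symm : M ⊗[k] (P ⊗[k] N) →ₗ[k] (M ⊗[k] P) ⊗[k] N) ∘ₗ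
    (TensorProduct.map LinearMap.id ((TensorProduct.comm k N P) : N ⊗[k] P →ₗ[k] P ⊗[k] N)) ∘ₗ
      ((TensorProduct.assoc k M N P) : (M ⊗[k] N) ⊗[k] P →ₗ[k] M ⊗[k] (N ⊗[k] P))

/-- `(u ⊗ v) ⊗ w ↦ (w ⊗ u) ⊗ v`. -/
def rot3 : (M ⊗[k] N) ⊗[k] P →ₗ[k] (P ⊗[k] M) ⊗[k] N :=
  ((TensorProduct.assoc k P M N).symm : P ⊗[k] (M ⊗[k] N) →ₗ[k] (P ⊗[k] M) ⊗[k] N) ∘ₗ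
    ((TensorProduct.comm k (M ⊗[k] N) P) : (M ⊗[k] N) ⊗[k] P →ₗ[k] P ⊗[k] (M ⊗[k] N))

end Reshuffle

/-- The iterated comultiplication `x ↦ (x' ⊗ x'') ⊗ x'''`. -/
def comul2 (B : BialgData k H) : H →ₗ[k] (H ⊗[k] H) ⊗[k] H :=
  (TensorProduct.map B.comul LinearMap.id) ∘ₗ B.comul

/-- The convolution multiplication on `H*`: `(fg)(x) = Σ f(x') g(x'')`. -/
def dualMul (B : BialgData k H) :
    Module.Dual k H ⊗[k] Module.Dual k H →ₗ[k] Module.Dual k H :=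
  B.comul.dualMap ∘ₗ TensorProduct.dualDistrib k H H

/-- The comultiplication on `H*` dual to the multiplication of `H`. -/
def dualComul (B : BialgData k H) [FiniteDimensional k H] :
    Module.Dual k H →ₗ[k] Module.Dual k H ⊗[k] Module.Dual k H :=
  ((TensorProduct.dualDistribEquiv k H H).symm :
      Module.Dual k (H ⊗[k] H) →ₗ[k] Module.Dual k H ⊗[k] Module.Dual k H) ∘ₗ
    B.mul.dualMap

/-- `u ⊗ v ↦ (x ↦ T⁻¹(u) · x · v)`, where `Tinv = T⁻¹`. -/
def conjLin (B : BialgData k H) (Tinv : H →ₗ[k] H) : H ⊗[k] H →ₗ[k] (H →ₗ[k] H) :=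
  TensorProduct.lift
    ((((LinearMap.llcomp k H H H) ∘ₗ (TensorProduct.curry B.mul).flip).compl₂
        ((TensorProduct.curry B.mul) ∘ₗ Tinv)).flip)

/-- `g ⊗ (u ⊗ v) ↦ g(T⁻¹(u) · ? · v)`. -/
def dualConj (B : BialgData k H) (Tinv : H →ₗ[k] H) :
    Module.Dual k H ⊗[k] (H ⊗[k] H) →ₗ[k] Module.Dual k H :=
  (TensorProduct.lift (LinearMap.llcomp k H H k)) ∘ₗ
    (TensorProduct.map LinearMap.id (B.conjLin Tinv))

/-- `a ↦ (a''' ⊗ a') ⊗ a''`. -/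
def comul2rot (B : BialgData k H) : H →ₗ[k] (H ⊗[k] H) ⊗[k] H :=
  (BialgData.rot3 k H H H) ∘ₗ B.comul2

/-- The multiplication of the quantum double `D(H) = H^{*cop} ∞ H`:
`(f ∞ a)(g ∞ b) = Σ f · g(T⁻¹(a''') ? a') ∞ a'' b`. -/
def doubleMul (B : BialgData k H) (Tinv : H →ₗ[k] H) :
    (Module.Dual k H ⊗[k] H) ⊗[k] (Module.Dual k H ⊗[k] H) →ₗ[k]
      Module.Dual k H ⊗[k] H :=
  (TensorProduct.map (B.dualMul) B.mul) ∘ₗ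
  (TensorProduct.map ((TensorProduct.comm k (Module.Dual k H) (Module.Dual k H)) :
      Module.Dual k H ⊗[k] Module.Dual k H →ₗ[k] Module.Dual k H ⊗[k] Module.Dual k H)
    (LinearMap.id : H ⊗[k] H →ₗ[k] H ⊗[k] H)) ∘ₗ
  ((TensorProduct.tensorTensorTensorComm k (Module.Dual k H) H (Module.Dual k H) H) :
    (Module.Dual k H ⊗[k] H) ⊗[k] (Module.Dual k H ⊗[k] H) →ₗ[k]
      (Module.Dual k H ⊗[k] Module.Dual k H) ⊗[k] (H ⊗[k] H)) ∘ₗ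
  (TensorProduct.map
    ((TensorProduct.map (B.dualConj Tinv) LinearMap.id) ∘ₗ
      ((TensorProduct.assoc k (Module.Dual k H) (H ⊗[k] H) H).symm :
        Module.Dual k H ⊗[k] ((H ⊗[k] H) ⊗[k] H) →ₗ[k]
          (Module.Dual k H ⊗[k] (H ⊗[k] H)) ⊗[k] H))
    (LinearMap.id : Module.Dual k H ⊗[k] H →ₗ[k] Module.Dual k H ⊗[k] H)) ∘ₗ
  ((TensorProduct.tensorTensorTensorComm k (Module.Dual k H) (Module.Dual k H)
      ((H ⊗[k] H) ⊗[k] H) H) :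
    (Module.Dual k H ⊗[k] Module.Dual k H) ⊗[k] (((H ⊗[k] H) ⊗[k] H) ⊗[k] H) →ₗ[k]
      (Module.Dual k H ⊗[k] ((H ⊗[k] H) ⊗[k] H)) ⊗[k] (Module.Dual k H ⊗[k] H)) ∘ₗ
  (TensorProduct.map (LinearMap.id : Module.Dual k H ⊗[k] Module.Dual k H →ₗ[k]
      Module.Dual k H ⊗[k] Module.Dual k H)
    (TensorProduct.map B.comul2rot (LinearMap.id : H →ₗ[k] H))) ∘ₗ
  (TensorProduct.map ((TensorProduct.comm k (Module.Dual k H) (Module.Dual k H)) :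
      Module.Dual k H ⊗[k] Module.Dual k H →ₗ[k] Module.Dual k H ⊗[k] Module.Dual k H)
    (LinearMap.id : H ⊗[k] H →ₗ[k] H ⊗[k] H)) ∘ₗ
  ((TensorProduct.tensorTensorTensorComm k (Module.Dual k H) H (Module.Dual k H) H) :
    (Module.Dual k H ⊗[k] H) ⊗[k] (Module.Dual k H ⊗[k] H) →ₗ[k]
      (Module.Dual k H ⊗[k] Module.Dual k H) ⊗[k] (H ⊗[k] H))

/-- The comultiplication of the quantum double `D(H) = H^{*cop} ∞ H`, using the
coproduct of `H^{*cop}` on the first factor. -/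
def doubleComul (B : BialgData k H) [FiniteDimensional k H] :
    Module.Dual k H ⊗[k] H →ₗ[k]
      (Module.Dual k H ⊗[k] H) ⊗[k] (Module.Dual k H ⊗[k] H) :=
  ((TensorProduct.tensorTensorTensorComm k (Module.Dual k H) (Module.Dual k H) H H) :
      (Module.Dual k H ⊗[k] Module.Dual k H) ⊗[k] (H ⊗[k] H) →ₗ[k]
        (Module.Dual k H ⊗[k] H) ⊗[k] (Module.Dual k H ⊗[k] H)) ∘ₗ
    (TensorProduct.map
      (((TensorProduct.comm k (Module.Dual k H) (Module.Dual k H)) :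
          Module.Dual k H ⊗[k] Module.Dual k H →ₗ[k]
            Module.Dual k H ⊗[k] Module.Dual k H) ∘ₗ B.dualComul)
      B.comul)

/-- The unit `ε ∞ 1` of the quantum double. -/
def doubleOne (B : BialgData k H) : Module.Dual k H ⊗[k] H :=
  B.counit ⊗ₜ B.one

/-- Componentwise multiplication on `D(H) ⊗ D(H)`. -/
def doubleMul2 (B : BialgData k H) (Tinv : H →ₗ[k] H) :
    ((Module.Dual k H ⊗[k] H) ⊗[k] (Module.Dual k H ⊗[k] H)) ⊗[k]
        ((Module.Dual k H ⊗[k] H) ⊗[k] (Module.Dual k H ⊗[k] H)) →ₗ[k]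
      (Module.Dual k H ⊗[k] H) ⊗[k] (Module.Dual k H ⊗[k] H) :=
  (TensorProduct.map (B.doubleMul Tinv) (B.doubleMul Tinv)) ∘ₗ
    ((TensorProduct.tensorTensorTensorComm k (Module.Dual k H ⊗[k] H)
        (Module.Dual k H ⊗[k] H) (Module.Dual k H ⊗[k] H) (Module.Dual k H ⊗[k] H)) :
      ((Module.Dual k H ⊗[k] H) ⊗[k] (Module.Dual k H ⊗[k] H)) ⊗[k]
          ((Module.Dual k H ⊗[k] H) ⊗[k] (Module.Dual k H ⊗[k] H)) →ₗ[k]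
        ((Module.Dual k H ⊗[k] H) ⊗[k] (Module.Dual k H ⊗[k] H)) ⊗[k]
          ((Module.Dual k H ⊗[k] H) ⊗[k] (Module.Dual k H ⊗[k] H)))

/-- Componentwise multiplication on `D(H) ⊗ D(H) ⊗ D(H)` (associated to the left). -/
def doubleMul3 (B : BialgData k H) (Tinv : H →ₗ[k] H) :
    (((Module.Dual k H ⊗[k] H) ⊗[k] (Module.Dual k H ⊗[k] H)) ⊗[k]
          (Module.Dual k H ⊗[k] H)) ⊗[k]
        (((Module.Dual k H ⊗[k] H) ⊗[k] (Module.Dual k H ⊗[k] H)) ⊗[k]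
          (Module.Dual k H ⊗[k] H)) →ₗ[k]
      ((Module.Dual k H ⊗[k] H) ⊗[k] (Module.Dual k H ⊗[k] H)) ⊗[k]
        (Module.Dual k H ⊗[k] H) :=
  (TensorProduct.map (B.doubleMul2 Tinv) (B.doubleMul Tinv)) ∘ₗ
    ((TensorProduct.tensorTensorTensorComm k
        ((Module.Dual k H ⊗[k] H) ⊗[k] (Module.Dual k H ⊗[k] H)) (Module.Dual k H ⊗[k] H)
        ((Module.Dual k H ⊗[k] H) ⊗[k] (Module.Dual k H ⊗[k] H)) (Module.Dual k H ⊗[k] H)) :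
      (((Module.Dual k H ⊗[k] H) ⊗[k] (Module.Dual k H ⊗[k] H)) ⊗[k]
            (Module.Dual k H ⊗[k] H)) ⊗[k]
          (((Module.Dual k H ⊗[k] H) ⊗[k] (Module.Dual k H ⊗[k] H)) ⊗[k]
            (Module.Dual k H ⊗[k] H)) →ₗ[k]
        (((Module.Dual k H ⊗[k] H) ⊗[k] (Module.Dual k H ⊗[k] H)) ⊗[k]
            ((Module.Dual k H ⊗[k] H) ⊗[k] (Module.Dual k H ⊗[k] H))) ⊗[k]
          ((Module.Dual k H ⊗[k] H) ⊗[k] (Module.Dual k H ⊗[k] H)))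

end BialgData

section Pairing

open BialgData

variable {k : Type} [Field k] {X A : Type}
  [AddCommGroup X] [Module k X] [AddCommGroup A] [Module k A]

/-- A weak Hopf pair `(X, A)`: a nondegenerate bilinear form `⟨·,·⟩ : X × A → k`
satisfying `⟨x, ab⟩ = Σ ⟨x', a⟩⟨x'', b⟩`, `⟨x, 1⟩ = ε(x)`,
`⟨xy, a⟩ = Σ ⟨x, a'⟩⟨y, a''⟩`, `⟨1, a⟩ = ε(a)` and `⟨S_X x, a⟩ = ⟨x, S_A a⟩`. -/
structure IsWeakHopfPair (BX : BialgData k X) (BA : BialgData k A)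
    (SX : X →ₗ[k] X) (SA : A →ₗ[k] A) (p : X →ₗ[k] A →ₗ[k] k) : Prop where
  nondegen_left : ∀ x : X, (∀ a : A, p x a = 0) → x = 0
  nondegen_right : ∀ a : A, (∀ x : X, p x a = 0) → a = 0
  pair_mul_right : ∀ (x : X) (a b : A),
    p x (BA.mul (a ⊗ₜ b)) =
      (TensorProduct.lid k k) ((TensorProduct.map (p.flip a) (p.flip b)) (BX.comul x))
  pair_one_right : ∀ x : X, p x BA.one = BX.counit x
  pair_mul_left : ∀ (x y : X) (a : A),
    p (BX.mul (x ⊗ₜ y)) a =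
      (TensorProduct.lid k k) ((TensorProduct.map (p x) (p y)) (BA.comul a))
  pair_one_left : ∀ a : A, p BX.one a = BA.counit a
  pair_antipode : ∀ (x : X) (a : A), p (SX x) a = p x (SA a)

/-- A weak Hopf skew-pair `(X, A)` (with `S_A` invertible, with inverse `SAinv`):
as a weak Hopf pair but with `⟨x, ab⟩ = Σ ⟨x'', a⟩⟨x', b⟩` and
`⟨S_X x, a⟩ = ⟨x, S_A⁻¹ a⟩`. -/
structure IsWeakHopfSkewPair (BX : BialgData k X) (BA : BialgData k A)
    (SX : X →ₗ[k] X) (SAinv : A →ₗ[k] A) (p : X →ₗ[k] A →ₗ[k] k) : Prop where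
  nondegen_left : ∀ x : X, (∀ a : A, p x a = 0) → x = 0
  nondegen_right : ∀ a : A, (∀ x : X, p x a = 0) → a = 0
  pair_mul_right : ∀ (x : X) (a b : A),
    p x (BA.mul (a ⊗ₜ b)) =
      (TensorProduct.lid k k) ((TensorProduct.map (p.flip b) (p.flip a)) (BX.comul x))
  pair_one_right : ∀ x : X, p x BA.one = BX.counit x
  pair_mul_left : ∀ (x y : X) (a : A),
    p (BX.mul (x ⊗ₜ y)) a =
      (TensorProduct.lid k k) ((TensorProduct.map (p x) (p y)) (BA.comul a))
  pair_one_left : ∀ a : A, p BX.one a = BA.counit a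
  pair_antipode : ∀ (x : X) (a : A), p (SX x) a = p x (SAinv a)

variable (BX : BialgData k X) (BA : BialgData k A)
  (SX : X →ₗ[k] X) (SAinv : A →ₗ[k] A) (p : X →ₗ[k] A →ₗ[k] k)

/-- Auxiliary map `x ↦ Σ ⟨x' · S_X(x'''), ·⟩ ⊗ x'' ∈ A* ⊗ X`. -/
def lactAux : X →ₗ[k] Module.Dual k A ⊗[k] X :=
  (TensorProduct.map (p ∘ₗ BX.mul ∘ₗ TensorProduct.map LinearMap.id SX) LinearMap.id) ∘ₗ
    (BialgData.swap23 k X X X) ∘ₗ BX.comul2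

/-- The left action `a ▷ x = Σ ⟨x' · S_X(x'''), a⟩ x''` of `A` on `X`,
as a linear map `A ⊗ X → X`. -/
def lact : A ⊗[k] X →ₗ[k] X :=
  ((TensorProduct.lid k X) : k ⊗[k] X →ₗ[k] X) ∘ₗ
    (TensorProduct.map (contractLeft k A) LinearMap.id) ∘ₗ
      (TensorProduct.map ((TensorProduct.comm k A (Module.Dual k A)) :
          A ⊗[k] Module.Dual k A →ₗ[k] Module.Dual k A ⊗[k] A) LinearMap.id) ∘ₗ
        ((TensorProduct.assoc k A (Module.Dual k A) X).symm :
          A ⊗[k] (Module.Dual k A ⊗[k] X) →ₗ[k] (A ⊗[k] Module.Dual k A) ⊗[k] X) ∘ₗ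
          (TensorProduct.map LinearMap.id (lactAux BX SX p))

/-- Auxiliary map `a ↦ Σ ⟨·, S_A⁻¹(a''') · a'⟩ ⊗ a'' ∈ X* ⊗ A`. -/
def ractAux : A →ₗ[k] Module.Dual k X ⊗[k] A :=
  (TensorProduct.map (p.flip ∘ₗ BA.mul ∘ₗ TensorProduct.map SAinv LinearMap.id)
      LinearMap.id) ∘ₗ
    (BialgData.rot3 k A A A) ∘ₗ BA.comul2

/-- The right action `a ◁ x = Σ ⟨x, S_A⁻¹(a''') a'⟩ a''` of `X` on `A`,
as a linear map `A ⊗ X → A`. -/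
def ract : A ⊗[k] X →ₗ[k] A :=
  ((TensorProduct.lid k A) : k ⊗[k] A →ₗ[k] A) ∘ₗ
    (TensorProduct.map (contractLeft k X) LinearMap.id) ∘ₗ
      (BialgData.swap23 k (Module.Dual k X) A X) ∘ₗ
        (TensorProduct.map (ractAux BA SAinv p) LinearMap.id)

end Pairing

/-!
In `D(H)` one has `(f ∞ a)(ε ∞ c) = f ∞ ac`, because `ε ∘ T⁻¹ = ε`, and
`(f ∞ 1)(g ∞ c) = fg ∞ c`, because `T⁻¹(1) = 1`; moreover `Δ(ε ∞ a) = Σ (ε ∞ a') ⊗ (ε ∞ a'')`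
and `Δ(f ∞ 1) = Σ (f'' ∞ 1) ⊗ (f' ∞ 1)`. With these, both identities reduce to
`Σ_i Δ(e_i) ⊗ e^i = Σ_{j,l} (e_j ⊗ e_l) ⊗ e^j e^l` and
`Σ_i e_i ⊗ Δ(e^i) = Σ_{j,l} e_j e_l ⊗ e^j ⊗ e^l`: both sides of each are the canonical element
of the comultiplication, respectively the multiplication, of `H`, written in the bases `{e_i}`
and `{e_j ⊗ e_l}`.
-/

namespace Module.Basis

variable {R M N ι κ : Type*} [CommSemiring R] [AddCommMonoid M] [AddCommMonoid N]
  [Module R M] [Module R N]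

theorem tensorProduct_coord (b : Basis ι R M) (c : Basis κ R N) (i : ι) (j : κ) :
    (b.tensorProduct c).coord (i, j) = TensorProduct.dualDistrib R M N (b.coord i ⊗ₜ c.coord j) :=
  TensorProduct.ext' fun m n => by simp [mul_comm]

/-- Both sides are the canonical element of `Hom(M, N) ≅ N ⊗ M*` attached to `φ`. -/
theorem sum_apply_tmul_coord [Fintype ι] [Fintype κ] (b : Basis ι R M) (c : Basis κ R N)
    (φ : M →ₗ[R] N) :
    ∑ i, φ (b i) ⊗ₜ[R] b.coord i = ∑ j, c j ⊗ₜ[R] (c.coord j ∘ₗ φ) := by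
  calc ∑ i, φ (b i) ⊗ₜ[R] b.coord i
      = ∑ i, ∑ j, c.coord j (φ (b i)) • (c j ⊗ₜ[R] b.coord i) := by
        refine Finset.sum_congr rfl fun i _ => ?_
        conv_lhs => rw [← c.sum_repr (φ (b i))]
        simp only [sum_tmul, smul_tmul', coord_apply]
    _ = ∑ j, c j ⊗ₜ[R] ∑ i, (c.coord j ∘ₗ φ) (b i) • b.coord i := by
        rw [Finset.sum_comm]
        simp only [tmul_sum, tmul_smul, LinearMap.comp_apply]
    _ = ∑ j, c j ⊗ₜ[R] (c.coord j ∘ₗ φ) := by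
        simp only [sum_dual_apply_smul_coord]

end Module.Basis

namespace BialgData

variable {k : Type} [Field k] {H : Type} [AddCommGroup H] [Module k H] {B : BialgData k H}
  {T Tinv : H →ₗ[k] H}

theorem IsAntiBialgebraHom.counit_apply_of_rightInverse (hT : B.IsAntiBialgebraHom T)
    (hinv : T ∘ₗ Tinv = LinearMap.id) (x : H) : B.counit (Tinv x) = B.counit x := by
  have hx : T (Tinv x) = x := LinearMap.congr_fun hinv x
  rw [← hT.2.2.2 (Tinv x), hx]

theorem IsAntiBialgebraHom.apply_one_of_leftInverse (hT : B.IsAntiBialgebraHom T)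
    (hinv : Tinv ∘ₗ T = LinearMap.id) : Tinv B.one = B.one := by
  simpa [hT.2.1] using LinearMap.congr_fun hinv B.one

theorem IsBialgebra.lid_map_counit_comp_comul (hB : B.IsBialgebra) :
    ((TensorProduct.lid k H : k ⊗[k] H →ₗ[k] H) ∘ₗ map B.counit LinearMap.id) ∘ₗ B.comul =
      LinearMap.id :=
  LinearMap.ext hB.counit_comul

/-- Contracting the two outer legs of `(a' ⊗ a'') ⊗ a'''` with the counit gives back `a`. -/
theorem IsBialgebra.counit_contract_comul2 (hB : B.IsBialgebra) (a : H) :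
    TensorProduct.rid k H (map LinearMap.id B.counit
      (map ((TensorProduct.lid k H : k ⊗[k] H →ₗ[k] H) ∘ₗ map B.counit LinearMap.id)
        LinearMap.id (B.comul2 a))) = a := by
  have h : map ((TensorProduct.lid k H : k ⊗[k] H →ₗ[k] H) ∘ₗ map B.counit LinearMap.id)
      LinearMap.id (B.comul2 a) = B.comul a := by
    rw [comul2, LinearMap.comp_apply, map_map, hB.lid_map_counit_comp_comul, LinearMap.id_comp,
      map_id, LinearMap.id_apply]
  rw [h, hB.comul_counit]

theorem dualMul_tmul (f g : Module.Dual k H) :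
    B.dualMul (f ⊗ₜ g) = TensorProduct.dualDistrib k H H (f ⊗ₜ g) ∘ₗ B.comul :=
  rfl

theorem IsBialgebra.dualMul_tmul_counit (hB : B.IsBialgebra) (f : Module.Dual k H) :
    B.dualMul (f ⊗ₜ B.counit) = f := by
  have : TensorProduct.dualDistrib k H H (f ⊗ₜ B.counit) =
      f ∘ₗ (TensorProduct.rid k H : H ⊗[k] k →ₗ[k] H) ∘ₗ map LinearMap.id B.counit :=
    TensorProduct.ext' fun x y => by simp [mul_comm]
  ext x
  rw [dualMul_tmul, this]
  exact congrArg f (hB.comul_counit x)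

theorem IsBialgebra.dualMul_counit_tmul (hB : B.IsBialgebra) (g : Module.Dual k H) :
    B.dualMul (B.counit ⊗ₜ g) = g := by
  have : TensorProduct.dualDistrib k H H (B.counit ⊗ₜ g) =
      g ∘ₗ (TensorProduct.lid k H : k ⊗[k] H →ₗ[k] H) ∘ₗ map B.counit LinearMap.id :=
    TensorProduct.ext' fun x y => by simp
  ext x
  rw [dualMul_tmul, this]
  exact congrArg g (hB.counit_comul x)

theorem dualConj_tmul (g : Module.Dual k H) (u v x : H) :
    B.dualConj Tinv (g ⊗ₜ (u ⊗ₜ v)) x = g (B.mul (B.mul (Tinv u ⊗ₜ x) ⊗ₜ v)) := by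
  simp [dualConj, conjLin]

theorem doubleMul_tmul_tmul (f g : Module.Dual k H) (a c : H) :
    B.doubleMul Tinv ((f ⊗ₜ a) ⊗ₜ (g ⊗ₜ c)) =
      map (B.dualMul ∘ₗ TensorProduct.mk k _ _ f) (B.mul ∘ₗ (TensorProduct.mk k H H).flip c)
        (map (B.dualConj Tinv ∘ₗ TensorProduct.mk k _ _ g) LinearMap.id (B.comul2rot a)) := by
  simp only [doubleMul, LinearMap.coe_comp, Function.comp_apply, tensorTensorTensorComm_tmul,
    map_tmul, LinearEquiv.coe_coe, comm_tmul, LinearMap.id_coe, id_eq]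
  generalize B.comul2rot a = X
  induction X using TensorProduct.induction_on with
  | zero => simp
  | tmul s w =>
    induction s using TensorProduct.induction_on with
    | zero => simp
    | tmul u v => simp
    | add s t hs ht => simp only [add_tmul, tmul_add, map_add, hs, ht]
  | add s t hs ht => simp only [add_tmul, tmul_add, map_add, hs, ht]

theorem IsBialgebra.dualConj_counit_tmul (hB : B.IsBialgebra)
    (hε : ∀ x, B.counit (Tinv x) = B.counit x) (u v : H) :
    B.dualConj Tinv (B.counit ⊗ₜ (u ⊗ₜ v)) = (B.counit u * B.counit v) • B.counit := by
  ext x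
  simp only [dualConj_tmul, hB.counit_mul, hε, LinearMap.smul_apply, smul_eq_mul]
  ring

theorem IsBialgebra.map_dualConj_counit_comul2rot (hB : B.IsBialgebra)
    (hε : ∀ x, B.counit (Tinv x) = B.counit x) (a : H) :
    map (B.dualConj Tinv ∘ₗ TensorProduct.mk k _ _ B.counit) LinearMap.id (B.comul2rot a) =
      B.counit ⊗ₜ a := by
  have hrot : map (B.dualConj Tinv ∘ₗ TensorProduct.mk k _ _ B.counit) LinearMap.id ∘ₗ
      (rot3 k H H H) =
      TensorProduct.mk k _ _ B.counit ∘ₗ (TensorProduct.rid k H : H ⊗[k] k →ₗ[k] H) ∘ₗ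
        map LinearMap.id B.counit ∘ₗ
          map ((TensorProduct.lid k H : k ⊗[k] H →ₗ[k] H) ∘ₗ map B.counit LinearMap.id)
            LinearMap.id :=
    TensorProduct.ext_threefold fun x y z => by
      simp [rot3, hB.dualConj_counit_tmul hε, smul_smul, mul_comm, smul_tmul']
  rw [comul2rot, ← LinearMap.comp_apply (map _ _), ← LinearMap.comp_assoc, hrot]
  simp only [LinearMap.comp_apply, LinearEquiv.coe_coe]
  rw [hB.counit_contract_comul2, TensorProduct.mk_apply]

theorem IsBialgebra.doubleMul_tmul_counit_tmul (hB : B.IsBialgebra)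
    (hε : ∀ x, B.counit (Tinv x) = B.counit x) (f : Module.Dual k H) (a c : H) :
    B.doubleMul Tinv ((f ⊗ₜ a) ⊗ₜ (B.counit ⊗ₜ c)) = f ⊗ₜ B.mul (a ⊗ₜ c) := by
  rw [doubleMul_tmul_tmul, hB.map_dualConj_counit_comul2rot hε]
  simp [hB.dualMul_tmul_counit]

theorem IsBialgebra.doubleMul_tmul_one_tmul (hB : B.IsBialgebra) (h1 : Tinv B.one = B.one)
    (f g : Module.Dual k H) (c : H) :
    B.doubleMul Tinv ((f ⊗ₜ B.one) ⊗ₜ (g ⊗ₜ c)) = B.dualMul (f ⊗ₜ g) ⊗ₜ c := by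
  have hg : B.dualConj Tinv (g ⊗ₜ (B.one ⊗ₜ B.one)) = g := by
    ext x
    rw [dualConj_tmul, h1, hB.one_mul, hB.mul_one]
  rw [doubleMul_tmul_tmul]
  simp [comul2rot, comul2, rot3, hB.comul_one, hg, hB.one_mul]

theorem doubleMul3_tmul (p q r p' q' r' : Module.Dual k H ⊗[k] H) :
    B.doubleMul3 Tinv (((p ⊗ₜ q) ⊗ₜ r) ⊗ₜ ((p' ⊗ₜ q') ⊗ₜ r')) =
      (B.doubleMul Tinv (p ⊗ₜ p') ⊗ₜ B.doubleMul Tinv (q ⊗ₜ q')) ⊗ₜ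
        B.doubleMul Tinv (r ⊗ₜ r') := by
  simp [doubleMul3, doubleMul2]

theorem sum_comul_tmul_coord {ι : Type} [Fintype ι] (b : Module.Basis ι k H) :
    ∑ i, B.comul (b i) ⊗ₜ[k] b.coord i =
      ∑ j, ∑ l, (b j ⊗ₜ[k] b l) ⊗ₜ[k] B.dualMul (b.coord j ⊗ₜ b.coord l) := by
  rw [b.sum_apply_tmul_coord (b.tensorProduct b), Fintype.sum_prod_type]
  simp only [Module.Basis.tensorProduct_apply, Module.Basis.tensorProduct_coord, dualMul_tmul]

section FiniteDimensional

variable [FiniteDimensional k H]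

theorem IsBialgebra.dualComul_counit (hB : B.IsBialgebra) :
    B.dualComul B.counit = B.counit ⊗ₜ B.counit := by
  rw [dualComul, LinearMap.comp_apply, LinearEquiv.coe_coe, LinearEquiv.symm_apply_eq]
  exact TensorProduct.ext' fun x y => by simp [hB.counit_mul]

theorem IsBialgebra.doubleComul_counit_tmul (hB : B.IsBialgebra) (a : H) :
    B.doubleComul (B.counit ⊗ₜ a) =
      map (TensorProduct.mk k _ H B.counit) (TensorProduct.mk k _ H B.counit) (B.comul a) := by
  simp only [doubleComul, LinearMap.comp_apply, map_tmul, hB.dualComul_counit,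
    LinearEquiv.coe_coe, comm_tmul]
  induction B.comul a using TensorProduct.induction_on with
  | zero => simp
  | tmul u v => simp
  | add s t hs ht => simp only [tmul_add, map_add, hs, ht]

theorem IsBialgebra.doubleComul_tmul_one (hB : B.IsBialgebra) (f : Module.Dual k H) :
    B.doubleComul (f ⊗ₜ B.one) =
      map ((TensorProduct.mk k _ H).flip B.one) ((TensorProduct.mk k _ H).flip B.one)
        (TensorProduct.comm k _ _ (B.dualComul f)) := by
  simp only [doubleComul, LinearMap.comp_apply, map_tmul, hB.comul_one, LinearEquiv.coe_coe]
  induction TensorProduct.comm k _ _ (B.dualComul f) using TensorProduct.induction_on with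
  | zero => simp
  | tmul g g' => simp
  | add s t hs ht => simp only [add_tmul, map_add, hs, ht]

variable {ι : Type} [Fintype ι]

theorem sum_tmul_dualComul_coord (b : Module.Basis ι k H) :
    ∑ i, b i ⊗ₜ[k] B.dualComul (b.coord i) =
      ∑ j, ∑ l, B.mul (b j ⊗ₜ b l) ⊗ₜ[k] (b.coord j ⊗ₜ[k] b.coord l) := by
  have hcoord : ∀ j l, (TensorProduct.dualDistribEquiv k H H).symm
      ((b.tensorProduct b).coord (j, l)) = b.coord j ⊗ₜ b.coord l := fun j l => by
    rw [LinearEquiv.symm_apply_eq, Module.Basis.tensorProduct_coord]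
    rfl
  have hcanon := congrArg
    (map LinearMap.id (TensorProduct.dualDistribEquiv k H H).symm.toLinearMap)
    ((b.tensorProduct b).sum_apply_tmul_coord b B.mul)
  simp only [map_sum, map_tmul, LinearMap.id_apply, LinearEquiv.coe_coe, Fintype.sum_prod_type,
    Module.Basis.tensorProduct_apply, hcoord] at hcanon
  -- `B.dualComul f` unfolds to `(dualDistribEquiv k H H).symm (f ∘ₗ B.mul)`
  exact hcanon.symm

theorem IsBialgebra.map_doubleComul_id_quasiRMatrix (hB : B.IsBialgebra)
    (hε : ∀ x, B.counit (Tinv x) = B.counit x) (h1 : Tinv B.one = B.one)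
    (b : Module.Basis ι k H) :
    map B.doubleComul LinearMap.id (∑ i, (B.counit ⊗ₜ b i) ⊗ₜ[k] (b.coord i ⊗ₜ B.one)) =
      B.doubleMul3 Tinv
        ((∑ i, ((B.counit ⊗ₜ b i) ⊗ₜ[k] B.doubleOne) ⊗ₜ[k] (b.coord i ⊗ₜ B.one)) ⊗ₜ
          (∑ i, (B.doubleOne ⊗ₜ[k] (B.counit ⊗ₜ b i)) ⊗ₜ[k] (b.coord i ⊗ₜ B.one))) := by
  let Ψ := map (map (TensorProduct.mk k (Module.Dual k H) H B.counit)
      (TensorProduct.mk k (Module.Dual k H) H B.counit))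
    ((TensorProduct.mk k (Module.Dual k H) H).flip B.one)
  calc _ = Ψ (∑ i, B.comul (b i) ⊗ₜ b.coord i) := by
        simp [Ψ, hB.doubleComul_counit_tmul]
    _ = Ψ (∑ j, ∑ l, (b j ⊗ₜ b l) ⊗ₜ B.dualMul (b.coord j ⊗ₜ b.coord l)) := by
        rw [sum_comul_tmul_coord]
    _ = _ := by
        simp only [Ψ, map_sum, map_tmul, mk_apply, LinearMap.flip_apply, doubleOne, tmul_sum,
          sum_tmul, doubleMul3_tmul, hB.doubleMul_tmul_counit_tmul hε,
          hB.doubleMul_tmul_one_tmul h1, hB.mul_one, hB.one_mul]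
        exact Finset.sum_comm

theorem IsBialgebra.map_id_doubleComul_quasiRMatrix (hB : B.IsBialgebra)
    (hε : ∀ x, B.counit (Tinv x) = B.counit x) (h1 : Tinv B.one = B.one)
    (b : Module.Basis ι k H) :
    (TensorProduct.assoc k (Module.Dual k H ⊗[k] H) (Module.Dual k H ⊗[k] H)
        (Module.Dual k H ⊗[k] H)).symm
      (map LinearMap.id B.doubleComul (∑ i, (B.counit ⊗ₜ b i) ⊗ₜ[k] (b.coord i ⊗ₜ B.one))) =
      B.doubleMul3 Tinv
        ((∑ i, ((B.counit ⊗ₜ b i) ⊗ₜ[k] B.doubleOne) ⊗ₜ[k] (b.coord i ⊗ₜ B.one)) ⊗ₜ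
          (∑ i, ((B.counit ⊗ₜ b i) ⊗ₜ[k] (b.coord i ⊗ₜ B.one)) ⊗ₜ[k] B.doubleOne)) := by
  let Ψ := (TensorProduct.assoc k (Module.Dual k H ⊗[k] H) (Module.Dual k H ⊗[k] H)
      (Module.Dual k H ⊗[k] H)).symm.toLinearMap ∘ₗ
    map (TensorProduct.mk k (Module.Dual k H) H B.counit)
      (map ((TensorProduct.mk k (Module.Dual k H) H).flip B.one)
          ((TensorProduct.mk k (Module.Dual k H) H).flip B.one) ∘ₗ
        (TensorProduct.comm k (Module.Dual k H) (Module.Dual k H)).toLinearMap)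
  calc _ = Ψ (∑ i, b i ⊗ₜ B.dualComul (b.coord i)) := by
        simp [Ψ, hB.doubleComul_tmul_one]
    _ = Ψ (∑ j, ∑ l, B.mul (b j ⊗ₜ b l) ⊗ₜ (b.coord j ⊗ₜ b.coord l)) := by
        rw [sum_tmul_dualComul_coord]
    _ = _ := by
        simp only [Ψ, map_sum, LinearMap.coe_comp, LinearEquiv.coe_coe, Function.comp_apply,
          map_tmul, mk_apply, comm_tmul, LinearMap.flip_apply, assoc_symm_tmul, doubleOne,
          tmul_sum, sum_tmul, doubleMul3_tmul, hB.doubleMul_tmul_counit_tmul hε,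
          hB.doubleMul_tmul_one_tmul h1, hB.dualMul_counit_tmul, hB.mul_one]
        exact Finset.sum_comm

end FiniteDimensional

end BialgData

theorem quantumDouble_quasiRMatrix_coproduct_general
    {k : Type} [Field k] {H : Type} [AddCommGroup H] [Module k H]
    [FiniteDimensional k H]
    (B : BialgData k H) (T Tinv : H →ₗ[k] H)
    (hB : B.IsBialgebra)
    (hanti : B.IsAntiBialgebraHom T)
    (hinv₁ : Tinv ∘ₗ T = LinearMap.id) (hinv₂ : T ∘ₗ Tinv = LinearMap.id)
    (ι : Type) [Fintype ι] (b : Module.Basis ι k H)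
    (R : (Module.Dual k H ⊗[k] H) ⊗[k] (Module.Dual k H ⊗[k] H))
    (hR : R = ∑ i : ι, (B.counit ⊗ₜ b i) ⊗ₜ[k] ((b.coord i) ⊗ₜ B.one))
    (R₁₂ R₁₃ R₂₃ : ((Module.Dual k H ⊗[k] H) ⊗[k] (Module.Dual k H ⊗[k] H)) ⊗[k]
      (Module.Dual k H ⊗[k] H))
    (hR12 : R₁₂ = ∑ i : ι,
      ((B.counit ⊗ₜ b i) ⊗ₜ[k] ((b.coord i) ⊗ₜ B.one)) ⊗ₜ[k] B.doubleOne)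
    (hR13 : R₁₃ = ∑ i : ι,
      ((B.counit ⊗ₜ b i) ⊗ₜ[k] B.doubleOne) ⊗ₜ[k] ((b.coord i) ⊗ₜ B.one))
    (hR23 : R₂₃ = ∑ i : ι,
      (B.doubleOne ⊗ₜ[k] (B.counit ⊗ₜ b i)) ⊗ₜ[k] ((b.coord i) ⊗ₜ B.one)) :
    (TensorProduct.map B.doubleComul LinearMap.id) R = B.doubleMul3 Tinv (R₁₃ ⊗ₜ R₂₃) ∧
    (TensorProduct.assoc k (Module.Dual k H ⊗[k] H) (Module.Dual k H ⊗[k] H)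
        (Module.Dual k H ⊗[k] H)).symm
      ((TensorProduct.map LinearMap.id B.doubleComul) R)
      = B.doubleMul3 Tinv (R₁₃ ⊗ₜ R₁₂) := by
  subst hR hR12 hR13 hR23
  have hε := hanti.counit_apply_of_rightInverse hinv₂
  have h1 := hanti.apply_one_of_leftInverse hinv₁
  exact ⟨hB.map_doubleComul_id_quasiRMatrix hε h1 b,
    hB.map_id_doubleComul_quasiRMatrix hε h1 b⟩

/-- `(Δ ⊗ id)(R) = R₁₃R₂₃` and `(id ⊗ Δ)(R) = R₁₃R₁₂` in
`D(H)^{⊗3}`, for `R = Σ_i (ε ∞ e_i) ⊗ (e^i ∞ 1)`. -/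
theorem quantumDouble_quasiRMatrix_coproduct
    {k : Type} [Field k] {H : Type} [AddCommGroup H] [Module k H]
    [FiniteDimensional k H]
    (B : BialgData k H) (T Tinv : H →ₗ[k] H)
    (hB : B.IsBialgebra) (hT : B.IsWeakAntipode T)
    (hanti : B.IsAntiBialgebraHom T)
    (hinv₁ : Tinv ∘ₗ T = LinearMap.id) (hinv₂ : T ∘ₗ Tinv = LinearMap.id)
    (hbp : B.Biperfect T)
    (ι : Type) [Fintype ι] (b : Module.Basis ι k H)
    (R : (Module.Dual k H ⊗[k] H) ⊗[k] (Module.Dual k H ⊗[k] H))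
    (hR : R = ∑ i : ι, (B.counit ⊗ₜ b i) ⊗ₜ[k] ((b.coord i) ⊗ₜ B.one))
    (R₁₂ R₁₃ R₂₃ : ((Module.Dual k H ⊗[k] H) ⊗[k] (Module.Dual k H ⊗[k] H)) ⊗[k]
      (Module.Dual k H ⊗[k] H))
    (hR12 : R₁₂ = ∑ i : ι,
      ((B.counit ⊗ₜ b i) ⊗ₜ[k] ((b.coord i) ⊗ₜ B.one)) ⊗ₜ[k] B.doubleOne)
    (hR13 : R₁₃ = ∑ i : ι,
      ((B.counit ⊗ₜ b i) ⊗ₜ[k] B.doubleOne) ⊗ₜ[k] ((b.coord i) ⊗ₜ B.one))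
    (hR23 : R₂₃ = ∑ i : ι,
      (B.doubleOne ⊗ₜ[k] (B.counit ⊗ₜ b i)) ⊗ₜ[k] ((b.coord i) ⊗ₜ B.one)) :
    (TensorProduct.map B.doubleComul LinearMap.id) R = B.doubleMul3 Tinv (R₁₃ ⊗ₜ R₂₃) ∧
    (TensorProduct.assoc k (Module.Dual k H ⊗[k] H) (Module.Dual k H ⊗[k] H)
        (Module.Dual k H ⊗[k] H)).symm
      ((TensorProduct.map LinearMap.id B.doubleComul) R)
      = B.doubleMul3 Tinv (R₁₃ ⊗ₜ R₁₂) :=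
  quantumDouble_quasiRMatrix_coproduct_general B T Tinv hB hanti hinv₁ hinv₂ ι b R hR R₁₂ R₁₃ R₂₃
    hR12 hR13 hR23
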